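/- arXiv:math/0407511 — 4 statements merged into one kernel-verified Lean document; each statement's English description precedes it below -/
import Mathlib

section
/- Evaluation at 1 ∈ ℤ_p gives a group isomorphism from the group of continuous homomorphisms Hom_c(ℤ_p, U₀) to U₀, where U₀ = {x ∈ 𝔬* : |x - 1| < p^{-1/(p-1)}}. -/
/-!
If `‖x - 1‖ < p^{-1/(p-1)}`, the binomial expansion of `((x - 1) + 1)^p` gives
`‖x^p - 1‖ ≤ ‖x - 1‖ / p`, and iterating, `‖x^k - 1‖ ≤ ‖x - 1‖ · ‖k‖_p` for every natural `k`.
So `n ↦ x^n` is Lipschitz for the `p`-adic metric on `ℕ`, and extends (`K` being complete) to a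
Lipschitz map on `ℤ_[p]`, in which `ℕ` is dense; by density the extension is a homomorphism,
it takes values in `U₀`, and it is the only continuous homomorphism with value `x` at `1`.
-/

noncomputable section

def padicRadius (p : ℕ) : ℝ := (p : ℝ) ^ (-(1 : ℝ) / ((p : ℝ) - 1))

open NNReal

theorem DenseRange.exists_lipschitzWith_extension {α X Y : Type*} [PseudoMetricSpace X]
    [MetricSpace Y] [CompleteSpace Y] {e : α → X} (he : DenseRange e) {f : α → Y} {C : ℝ≥0}
    (hf : ∀ a b, dist (f a) (f b) ≤ C * dist (e a) (e b)) :
    ∃ F : X → Y, LipschitzWith C F ∧ ∀ a, F (e a) = f a := by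
  let _ : PseudoMetricSpace α := PseudoMetricSpace.induced e inferInstance
  have he_ind : IsUniformInducing e :=
    (Isometry.of_dist_eq (f := e) fun _ _ => rfl).isUniformInducing
  have hf_unif : UniformContinuous f := (LipschitzWith.of_dist_le_mul hf).uniformContinuous
  set F := (he_ind.isDenseInducing he).extend f
  have hF_cont : Continuous F := (uniformContinuous_uniformly_extend he_ind he hf_unif).continuous
  have hF_eq : ∀ a, F (e a) = f a := uniformly_extend_of_ind he_ind he hf_unif
  refine ⟨F, LipschitzWith.of_dist_le_mul fun x y => ?_, hF_eq⟩
  refine he.induction_on₂ (p := fun x y => dist (F x) (F y) ≤ C * dist x y) ?_ (fun a b => ?_) x y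
  · exact isClosed_le (by fun_prop) (by fun_prop)
  · simpa only [hF_eq] using hf a b

section padicRadius

variable (p : ℕ) [Fact p.Prime]

lemma padicRadius_lt_one : padicRadius p < 1 := by
  have hp : (1 : ℝ) < p := mod_cast (Fact.out : p.Prime).one_lt
  exact Real.rpow_lt_one_of_one_lt_of_neg hp (div_neg_of_neg_of_pos (by norm_num) (by linarith))

lemma padicRadius_pow_sub_one : padicRadius p ^ (p - 1) = (p : ℝ)⁻¹ := by
  have hp : (1 : ℝ) < p := mod_cast (Fact.out : p.Prime).one_lt
  rw [padicRadius, ← Real.rpow_natCast, ← Real.rpow_mul (by linarith),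
    Nat.cast_sub (Fact.out : p.Prime).one_le, Nat.cast_one,
    div_mul_cancel₀ _ (by linarith), Real.rpow_neg_one]

end padicRadius

lemma PadicInt.norm_natCast_eq_inv_pow_padicValNat {p : ℕ} [Fact p.Prime] {k : ℕ} (hk : k ≠ 0) :
    ‖(k : ℤ_[p])‖ = (p : ℝ)⁻¹ ^ padicValNat p k := by
  rw [PadicInt.norm_def, PadicInt.coe_natCast, Padic.norm_eq_zpow_neg_valuation (mod_cast hk),
    Padic.valuation_natCast, zpow_neg, zpow_natCast, inv_pow]

section Ultrametric

variable {K : Type*} [NormedField K] [IsUltrametricDist K]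

lemma norm_eq_one_of_norm_sub_one_lt_one {x : K} (h : ‖x - 1‖ < 1) : ‖x‖ = 1 := by
  have := IsUltrametricDist.norm_add_eq_max_of_norm_ne_norm (h.trans_eq norm_one.symm).ne
  rwa [sub_add_cancel, norm_one, max_eq_right h.le] at this

lemma norm_pow_sub_one_le {x : K} (hx : ‖x‖ = 1) (n : ℕ) : ‖x ^ n - 1‖ ≤ ‖x - 1‖ := by
  induction n with
  | zero => simp
  | succ n ih =>
    rw [show x ^ (n + 1) - 1 = x ^ n * (x - 1) + (x ^ n - 1) by ring]
    refine (IsUltrametricDist.norm_add_le_max _ _).trans (max_le ?_ ih)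
    rw [norm_mul, norm_pow, hx, one_pow, one_mul]

variable {p : ℕ} [Fact p.Prime]

lemma norm_pow_prime_sub_one_le (hp : ‖(p : K)‖ = (p : ℝ)⁻¹) {x : K}
    (hx : ‖x - 1‖ < padicRadius p) : ‖x ^ p - 1‖ ≤ ‖x - 1‖ * (p : ℝ)⁻¹ := by
  have hpp : p.Prime := Fact.out
  have hx1 : ‖x - 1‖ < 1 := hx.trans (padicRadius_lt_one p)
  have hexp : x ^ p - 1 = ∑ i ∈ Finset.range p, (p.choose (i + 1) : K) * (x - 1) ^ (i + 1) := by
    have := add_pow (x - 1) 1 p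
    simp only [one_pow, mul_one, sub_add_cancel] at this
    rw [this, Finset.sum_range_succ']
    simp [mul_comm]
  rw [hexp]
  refine IsUltrametricDist.norm_sum_le_of_forall_le_of_nonneg (by positivity) fun i hi => ?_
  rw [norm_mul, norm_pow, pow_succ']
  rcases (Order.add_one_le_of_lt (Finset.mem_range.mp hi)).eq_or_lt with hip | hip
  · rw [hip, Nat.choose_self, Nat.cast_one, norm_one, one_mul, show i = p - 1 by omega,
      ← padicRadius_pow_sub_one p]
    exact mul_le_mul_of_nonneg_left (pow_le_pow_left₀ (norm_nonneg _) hx.le _) (norm_nonneg _)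
  · obtain ⟨m, hm⟩ := hpp.dvd_choose_self i.succ_ne_zero hip
    have hchoose : ‖(p.choose (i + 1) : K)‖ ≤ (p : ℝ)⁻¹ := by
      rw [hm, Nat.cast_mul, norm_mul, hp]
      exact mul_le_of_le_one_right (by positivity) (IsUltrametricDist.norm_natCast_le_one K m)
    have hpow : ‖x - 1‖ ^ i ≤ 1 := pow_le_one₀ (norm_nonneg _) hx1.le
    calc _ ≤ (p : ℝ)⁻¹ * (‖x - 1‖ * 1) := by gcongr
      _ = _ := by ring

lemma norm_pow_prime_pow_sub_one_le (hp : ‖(p : K)‖ = (p : ℝ)⁻¹) {x : K}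
    (hx : ‖x - 1‖ < padicRadius p) (n : ℕ) : ‖x ^ p ^ n - 1‖ ≤ ‖x - 1‖ * (p : ℝ)⁻¹ ^ n := by
  have hp_inv : (p : ℝ)⁻¹ ≤ 1 := inv_le_one_of_one_le₀ (mod_cast (Fact.out : p.Prime).one_le)
  induction n generalizing x with
  | zero => simp
  | succ n ih =>
    have hxp : ‖x ^ p - 1‖ ≤ ‖x - 1‖ * (p : ℝ)⁻¹ := norm_pow_prime_sub_one_le hp hx
    have hxp_lt : ‖x ^ p - 1‖ < padicRadius p :=
      hxp.trans_lt ((mul_le_of_le_one_right (norm_nonneg _) hp_inv).trans_lt hx)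
    calc ‖x ^ p ^ (n + 1) - 1‖ = ‖(x ^ p) ^ p ^ n - 1‖ := by rw [pow_succ', pow_mul]
      _ ≤ ‖x ^ p - 1‖ * (p : ℝ)⁻¹ ^ n := ih hxp_lt
      _ ≤ ‖x - 1‖ * (p : ℝ)⁻¹ * (p : ℝ)⁻¹ ^ n := by gcongr
      _ = ‖x - 1‖ * (p : ℝ)⁻¹ ^ (n + 1) := by ring

lemma norm_pow_sub_one_le_mul_norm_natCast (hp : ‖(p : K)‖ = (p : ℝ)⁻¹) {x : K}
    (hx : ‖x - 1‖ < padicRadius p) (k : ℕ) : ‖x ^ k - 1‖ ≤ ‖x - 1‖ * ‖(k : ℤ_[p])‖ := by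
  rcases eq_or_ne k 0 with rfl | hk
  · simp
  have hx_norm : ‖x‖ = 1 := norm_eq_one_of_norm_sub_one_lt_one (hx.trans (padicRadius_lt_one p))
  obtain ⟨j, hj⟩ : p ^ padicValNat p k ∣ k := pow_padicValNat_dvd
  rw [PadicInt.norm_natCast_eq_inv_pow_padicValNat hk]
  nth_rw 1 [hj]
  rw [pow_mul]
  refine (norm_pow_sub_one_le ?_ j).trans (norm_pow_prime_pow_sub_one_le hp hx _)
  rw [norm_pow, hx_norm, one_pow]

lemma dist_pow_pow_le (hp : ‖(p : K)‖ = (p : ℝ)⁻¹) {x : K} (hx : ‖x - 1‖ < padicRadius p)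
    (m n : ℕ) : dist (x ^ m) (x ^ n) ≤ ‖x - 1‖₊ * dist (m : ℤ_[p]) (n : ℤ_[p]) := by
  wlog hnm : n ≤ m generalizing m n
  · rw [dist_comm, dist_comm (m : ℤ_[p])]
    exact this n m (le_of_not_ge hnm)
  obtain ⟨k, rfl⟩ := Nat.exists_eq_add_of_le hnm
  have hx_norm : ‖x‖ = 1 := norm_eq_one_of_norm_sub_one_lt_one (hx.trans (padicRadius_lt_one p))
  rw [dist_eq_norm, dist_eq_norm, pow_add, ← mul_sub_one, norm_mul, norm_pow, hx_norm, one_pow,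
    one_mul, Nat.cast_add, add_sub_cancel_left, coe_nnnorm]
  exact norm_pow_sub_one_le_mul_norm_natCast hp hx k

end Ultrametric

lemma map_natCast_eq_pow {R M : Type*} [AddMonoidWithOne R] [MonoidWithZero M]
    [IsLeftCancelMulZero M] {f : R → M} (hf : ∀ a b, f (a + b) = f a * f b) (hf0 : f 0 ≠ 0)
    (n : ℕ) : f n = f 1 ^ n := by
  induction n with
  | zero => simpa using (mul_eq_left₀ hf0).mp (by rw [← hf, add_zero])
  | succ n ih => rw [Nat.cast_succ, hf, ih, pow_succ]

section DenseNatCast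

variable {R M : Type*} [TopologicalSpace R] [AddMonoidWithOne R]
  (hR : DenseRange (Nat.cast : ℕ → R))
include hR

lemma DenseRange.eq_of_map_add_of_map_one_eq [MonoidWithZero M] [IsLeftCancelMulZero M]
    [TopologicalSpace M] [T2Space M] {f g : R → M} (hfc : Continuous f) (hgc : Continuous g)
    (hf : ∀ a b, f (a + b) = f a * f b) (hg : ∀ a b, g (a + b) = g a * g b) (hf0 : f 0 ≠ 0)
    (hg0 : g 0 ≠ 0) (h1 : f 1 = g 1) : f = g :=
  hR.equalizer hfc hgc <| funext fun n => by
    simp only [Function.comp_apply, map_natCast_eq_pow hf hf0, map_natCast_eq_pow hg hg0, h1]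

lemma DenseRange.map_add_of_map_natCast_eq_pow [ContinuousAdd R] [Monoid M] [TopologicalSpace M]
    [ContinuousMul M] [T2Space M] {F : R → M} (hF : Continuous F) {x : M}
    (hFx : ∀ n : ℕ, F n = x ^ n) (a b : R) : F (a + b) = F a * F b := by
  refine hR.induction_on₂ (p := fun a b => F (a + b) = F a * F b) ?_ (fun m n => ?_) a b
  · exact isClosed_eq (by fun_prop) (by fun_prop)
  · simp only [← Nat.cast_add, hFx, pow_add]

end DenseNatCast

lemma ne_zero_of_norm_sub_one_lt_one {K : Type*} [NormedRing K] [NormOneClass K] {x : K}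
    (h : ‖x - 1‖ < 1) : x ≠ 0 := by
  rintro rfl
  simp at h

theorem exists_continuous_map_add_eq_mul_map_one_eq {p : ℕ} [Fact p.Prime] {K : Type*}
    [NormedField K] [IsUltrametricDist K] [CompleteSpace K] (hp : ‖(p : K)‖ = (p : ℝ)⁻¹) {x : K}
    (hx : ‖x - 1‖ < padicRadius p) :
    ∃ F : ℤ_[p] → K, Continuous F ∧ (∀ a b, F (a + b) = F a * F b) ∧
      (∀ a, ‖F a - 1‖ < padicRadius p) ∧ F 1 = x := by
  obtain ⟨F, hF_lip, hFx⟩ :=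
    PadicInt.denseRange_natCast.exists_lipschitzWith_extension (dist_pow_pow_le hp hx)
  refine ⟨F, hF_lip.continuous,
    PadicInt.denseRange_natCast.map_add_of_map_natCast_eq_pow hF_lip.continuous hFx,
    fun a => ?_, by simpa using hFx 1⟩
  calc ‖F a - 1‖ = dist (F a) (F (0 : ℕ)) := by rw [hFx, pow_zero, dist_eq_norm]
    _ ≤ ‖x - 1‖ * ‖a‖ := by simpa using hF_lip.dist_le_mul a 0
    _ ≤ ‖x - 1‖ := mul_le_of_le_one_right (norm_nonneg _) a.norm_le_one
    _ < padicRadius p := hx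

theorem eval_one_bijective_homc_Zp_U0_general
    (p : ℕ) [Fact (Nat.Prime p)]
    (K : Type) [NormedField K] [CompleteSpace K]
    (hna : IsNonarchimedean fun x : K => ‖x‖)
    (hp : ‖(p : K)‖ = (p : ℝ)⁻¹) :
    Function.Bijective
      (fun f : {f : ℤ_[p] → K // Continuous f ∧ (∀ a b : ℤ_[p], f (a + b) = f a * f b) ∧
          ∀ a : ℤ_[p], ‖f a - 1‖ < padicRadius p} =>
        (⟨f.1 1, f.2.2.2 1⟩ : {x : K // ‖x - 1‖ < padicRadius p})) := by
  have : IsUltrametricDist K := IsUltrametricDist.isUltrametricDist_of_isNonarchimedean_norm hna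
  have hU_ne_zero {y : K} (hy : ‖y - 1‖ < padicRadius p) : y ≠ 0 :=
    ne_zero_of_norm_sub_one_lt_one (hy.trans (padicRadius_lt_one p))
  constructor
  · rintro ⟨f, hfc, hf, hfU⟩ ⟨g, hgc, hg, hgU⟩ h1
    exact Subtype.ext <| PadicInt.denseRange_natCast.eq_of_map_add_of_map_one_eq hfc hgc hf hg
      (hU_ne_zero (hfU 0)) (hU_ne_zero (hgU 0)) (congrArg Subtype.val h1)
  · rintro ⟨x, hx⟩
    obtain ⟨F, hFc, hF, hFU, hF1⟩ := exists_continuous_map_add_eq_mul_map_one_eq hp hx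
    exact ⟨⟨F, hFc, hF, hFU⟩, Subtype.ext hF1⟩

theorem eval_one_bijective_homc_Zp_U0
    (p : ℕ) [Fact (Nat.Prime p)]
    (K : Type) [NormedField K] [CompleteSpace K] [IsAlgClosed K] [CharZero K]
    (hna : IsNonarchimedean fun x : K => ‖x‖)
    (hp : ‖(p : K)‖ = (p : ℝ)⁻¹) :
    Function.Bijective
      (fun f : {f : ℤ_[p] → K // Continuous f ∧ (∀ a b : ℤ_[p], f (a + b) = f a * f b) ∧
          ∀ a : ℤ_[p], ‖f a - 1‖ < padicRadius p} =>
        (⟨f.1 1, f.2.2.2 1⟩ : {x : K // ‖x - 1‖ < padicRadius p})) :=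
  eval_one_bijective_homc_Zp_U0_general p K hna hp
end
end

section
/- Evaluation at 1 ∈ ℤ_p gives a group isomorphism from the group of continuous homomorphisms Hom_c(ℤ_p, U₁) to U₁, where U₁ = {x ∈ 𝔬* : |x-1| < 1}: every b ∈ U₁ is the value at 1 of a unique continuous homomorphism ℤ_p → U₁. -/
/-!
STATEMENT 4: Evaluation at `1 ∈ ℤ_p` is a group isomorphism (bijection) from the
continuous homomorphisms `Hom_c(ℤ_p, U₁)` to `U₁ = {x : ‖x - 1‖ < 1}`: every `b ∈ U₁`
is the value at `1` of a unique continuous homomorphism `ℤ_p → U₁`. `K` models `ℂ_p`.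
-/

open Filter Topology

variable {K : Type} [NormedField K]

lemma myNonarchSum (hna : IsNonarchimedean fun x : K => ‖x‖) {ι : Type*} (s : Finset ι)
    (f : ι → K) {C : ℝ} (hC : 0 ≤ C) (h : ∀ i ∈ s, ‖f i‖ ≤ C) : ‖∑ i ∈ s, f i‖ ≤ C := by
  classical
  induction s using Finset.induction with
  | empty => simpa
  | @insert a s hi ih =>
    rw [Finset.sum_insert hi]
    exact le_trans (hna _ _) (max_le (h _ (Finset.mem_insert_self _ _))
      (ih fun i hi' => h i (Finset.mem_insert_of_mem hi')))

lemma myNatCastNorm (hna : IsNonarchimedean fun x : K => ‖x‖) (n : ℕ) : ‖(n : K)‖ ≤ 1 := by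
  induction n with
  | zero => simp
  | succ k ih =>
    push_cast
    exact le_trans (hna _ _) (by simpa using ih)

/-- Lemma A -/
lemma myPowSubOne (hna : IsNonarchimedean fun x : K => ‖x‖) {b : K} (hb : ‖b‖ ≤ 1) (k : ℕ) :
    ‖b ^ k - 1‖ ≤ ‖b - 1‖ := by
  induction k with
  | zero => simp
  | succ k ih =>
    have : b ^ (k + 1) - 1 = b ^ k * (b - 1) + (b ^ k - 1) := by ring
    rw [this]
    refine le_trans (hna _ _) (max_le ?_ ih)
    show ‖b ^ k * (b - 1)‖ ≤ ‖b - 1‖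
    rw [norm_mul]
    calc ‖b ^ k‖ * ‖b - 1‖ ≤ 1 * ‖b - 1‖ := by
          have h1 : ‖b ^ k‖ ≤ 1 := (norm_pow b k) ▸ pow_le_one₀ (norm_nonneg b) hb
          exact mul_le_mul_of_nonneg_right h1 (norm_nonneg _)
      _ = ‖b - 1‖ := one_mul _

lemma normLeOne (hna : IsNonarchimedean fun x : K => ‖x‖) {b : K} (hb : ‖b - 1‖ < 1) :
    ‖b‖ ≤ 1 := by
  have : b = (b - 1) + 1 := by ring
  rw [this]
  exact le_trans (hna _ _) (by simp [max_le_iff, hb.le])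

/-- one-step estimate -/
lemma myStep {p : ℕ} (hpp : p.Prime) (hna : IsNonarchimedean fun x : K => ‖x‖)
    (hp : ‖(p : K)‖ = (p : ℝ)⁻¹) {b : K} (hb : ‖b - 1‖ < 1) :
    ‖b ^ p - 1‖ ≤ max (p : ℝ)⁻¹ ‖b - 1‖ * ‖b - 1‖ := by
  set t := b - 1 with ht
  have hbt : b = t + 1 := by ring
  have key := add_pow_prime_eq hpp t (1 : K)
  have hone : (1 : K) ^ p = 1 := one_pow p
  have hEq : b ^ p - 1 = t ^ p + p * ∑ k ∈ Finset.Ioo 0 p, t ^ k * 1 ^ (p - k) * ↑(p.choose k / p) := by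
    rw [hbt, key, hone]
    have hs : t * ∑ k ∈ Finset.Ioo 0 p, t ^ (k - 1) * 1 ^ (p - k - 1) * (↑(p.choose k / p) : K)
        = ∑ k ∈ Finset.Ioo 0 p, t ^ k * 1 ^ (p - k) * (↑(p.choose k / p) : K) := by
      rw [Finset.mul_sum]
      refine Finset.sum_congr rfl fun k hk => ?_
      obtain ⟨hk1, -⟩ := Finset.mem_Ioo.mp hk
      obtain ⟨j, rfl⟩ : ∃ j, k = j + 1 := ⟨k - 1, by omega⟩
      simp only [one_pow, mul_one, Nat.add_sub_cancel]
      ring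
    rw [← hs]; ring
  rw [hEq]
  have ht1 : ‖t‖ ≤ 1 := hb.le
  have hS : ‖∑ k ∈ Finset.Ioo 0 p, t ^ k * 1 ^ (p - k) * (↑(p.choose k / p) : K)‖ ≤ ‖t‖ := by
    refine myNonarchSum hna _ _ (norm_nonneg t) fun i hi => ?_
    rw [Finset.mem_Ioo] at hi
    rw [norm_mul, norm_mul, one_pow, norm_one, mul_one, norm_pow]
    calc ‖t‖ ^ i * ‖(↑(p.choose i / p) : K)‖ ≤ ‖t‖ ^ i * 1 :=
          mul_le_mul_of_nonneg_left (myNatCastNorm hna _) (by positivity)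
      _ = ‖t‖ ^ i := mul_one _
      _ ≤ ‖t‖ ^ 1 := pow_le_pow_of_le_one (norm_nonneg t) ht1 hi.1
      _ = ‖t‖ := pow_one _
  refine le_trans (hna _ _) (max_le ?_ ?_)
  · show ‖t ^ p‖ ≤ _
    rw [norm_pow]
    calc ‖t‖ ^ p ≤ ‖t‖ ^ 2 := pow_le_pow_of_le_one (norm_nonneg t) ht1 hpp.two_le
      _ = ‖t‖ * ‖t‖ := sq ‖t‖
      _ ≤ max (p : ℝ)⁻¹ ‖t‖ * ‖t‖ :=
          mul_le_mul_of_nonneg_right (le_max_right _ _) (norm_nonneg t)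
  · show ‖(p : K) * _‖ ≤ _
    rw [norm_mul, hp]
    calc (p:ℝ)⁻¹ * ‖_‖ ≤ (p:ℝ)⁻¹ * ‖t‖ := by
          refine mul_le_mul_of_nonneg_left hS (by positivity)
      _ ≤ max (p : ℝ)⁻¹ ‖t‖ * ‖t‖ :=
          mul_le_mul_of_nonneg_right (le_max_left _ _) (norm_nonneg t)

/-- decay -/
lemma myDecay {p : ℕ} (hpp : p.Prime) (hna : IsNonarchimedean fun x : K => ‖x‖)
    (hp : ‖(p : K)‖ = (p : ℝ)⁻¹) {b : K} (hb : ‖b - 1‖ < 1) (n : ℕ) :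
    ‖b ^ (p ^ n) - 1‖ ≤ (max (p : ℝ)⁻¹ ‖b - 1‖) ^ n * ‖b - 1‖ := by
  set c := max (p : ℝ)⁻¹ ‖b - 1‖ with hc
  have hc1 : c < 1 := by
    apply max_lt _ hb
    rw [inv_lt_one_iff₀]
    right
    exact_mod_cast hpp.one_lt
  have hc0 : 0 ≤ c := le_trans (by positivity) (le_max_left _ _)
  induction n with
  | zero => simp only [pow_zero, pow_one]; exact le_of_eq (one_mul _).symm
  | succ n ih =>
    have hd : ‖b ^ (p ^ n) - 1‖ < 1 :=
      lt_of_le_of_lt ih (lt_of_le_of_lt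
        (mul_le_of_le_one_left (norm_nonneg _) (pow_le_one₀ hc0 hc1.le)) hb)
    have step := myStep hpp hna hp hd
    have hrw : b ^ p ^ (n + 1) = (b ^ p ^ n) ^ p := by
      rw [← pow_mul, pow_succ]
    rw [hrw]
    refine le_trans step ?_
    have h1 : max (p : ℝ)⁻¹ ‖b ^ p ^ n - 1‖ ≤ c := by
      apply max_le (le_max_left _ _)
      refine le_trans ih (le_trans (mul_le_of_le_one_left (norm_nonneg _) (pow_le_one₀ hc0 hc1.le)) (le_max_right _ _))
    calc max (p : ℝ)⁻¹ ‖b ^ p ^ n - 1‖ * ‖b ^ p ^ n - 1‖ ≤ c * (c ^ n * ‖b - 1‖) := by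
          apply mul_le_mul h1 ih (norm_nonneg _) hc0
      _ = c ^ (n + 1) * ‖b - 1‖ := by ring

/-- estimate for powers congruent mod p^n, ordered version -/
lemma myEstLe {p : ℕ} [hF : Fact p.Prime] (hna : IsNonarchimedean fun x : K => ‖x‖)
    {b : K} (hb1 : ‖b‖ ≤ 1) {m k n : ℕ} (hkm : k ≤ m)
    (h : ‖((m : ℤ_[p]) - (k : ℤ_[p]))‖ ≤ (p : ℝ) ^ (-(n : ℤ))) :
    ‖b ^ m - b ^ k‖ ≤ ‖b ^ p ^ n - 1‖ := by
  have hdvd : ((p : ℤ) ^ n) ∣ ((m : ℤ) - (k : ℤ)) := by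
    rw [← PadicInt.norm_int_le_pow_iff_dvd]
    push_cast
    exact h
  have hdvdN : p ^ n ∣ m - k := by
    have : ((m - k : ℕ) : ℤ) = (m : ℤ) - k := by omega
    have h2 : ((p ^ n : ℕ) : ℤ) ∣ ((m - k : ℕ) : ℤ) := by rw [this]; exact_mod_cast hdvd
    exact_mod_cast h2
  obtain ⟨j, hj⟩ := hdvdN
  have hm : m = k + p ^ n * j := by omega
  have hEq : b ^ m - b ^ k = b ^ k * ((b ^ p ^ n) ^ j - 1) := by
    rw [hm, pow_add, pow_mul]; ring
  rw [hEq, norm_mul]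
  have h1 : ‖b ^ k‖ ≤ 1 := (norm_pow b k) ▸ pow_le_one₀ (norm_nonneg b) hb1
  have h2 : ‖(b ^ p ^ n) ^ j - 1‖ ≤ ‖b ^ p ^ n - 1‖ :=
    myPowSubOne hna ((norm_pow b (p ^ n)) ▸ pow_le_one₀ (norm_nonneg b) hb1) j
  calc ‖b ^ k‖ * ‖(b ^ p ^ n) ^ j - 1‖ ≤ 1 * ‖b ^ p ^ n - 1‖ :=
        mul_le_mul h1 h2 (norm_nonneg _) zero_le_one
    _ = _ := one_mul _

lemma myEst {p : ℕ} [hF : Fact p.Prime] (hna : IsNonarchimedean fun x : K => ‖x‖)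
    {b : K} (hb1 : ‖b‖ ≤ 1) (m k n : ℕ)
    (h : ‖((m : ℤ_[p]) - (k : ℤ_[p]))‖ ≤ (p : ℝ) ^ (-(n : ℤ))) :
    ‖b ^ m - b ^ k‖ ≤ ‖b ^ p ^ n - 1‖ := by
  rcases le_total k m with hkm | hmk
  · exact myEstLe hna hb1 hkm h
  · rw [norm_sub_rev]
    exact myEstLe hna hb1 hmk (by rwa [norm_sub_rev] at h)

theorem myExists (p : ℕ) [hF : Fact p.Prime] [CompleteSpace K]
    (hna : IsNonarchimedean fun x : K => ‖x‖) (hp : ‖(p : K)‖ = (p : ℝ)⁻¹)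
    (b : K) (hb : ‖b - 1‖ < 1) :
    ∃ f : ℤ_[p] → K, Continuous f ∧ (∀ a c : ℤ_[p], f (a + c) = f a * f c) ∧
      (∀ a : ℤ_[p], ‖f a - 1‖ ≤ ‖b - 1‖) ∧ f 1 = b := by
  have hpp := hF.out
  have hb1 : ‖b‖ ≤ 1 := normLeOne hna hb
  set c := max (p : ℝ)⁻¹ ‖b - 1‖ with hcdef
  have hc1 : c < 1 := max_lt (by rw [inv_lt_one_iff₀]; right; exact_mod_cast hpp.one_lt) hb
  have hc0 : 0 ≤ c := le_trans (norm_nonneg _) (le_max_right _ _)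
  have hdecay : ∀ n, ‖b ^ p ^ n - 1‖ ≤ c ^ n * ‖b - 1‖ := myDecay hpp hna hp hb
  have hp1 : (1 : ℝ) ≤ (p : ℝ) := by exact_mod_cast hpp.one_le
  have hple : ∀ m n : ℕ, m ≤ n → (p : ℝ) ^ (-(n : ℤ)) ≤ (p : ℝ) ^ (-(m : ℤ)) := fun m n h =>
    zpow_le_zpow_right₀ hp1 (by omega)
  have hsub : ∀ q r : ℤ_[p], ‖q - r‖ ≤ max ‖q‖ ‖r‖ := fun q r => by
    rw [sub_eq_add_neg]
    refine le_trans (PadicInt.nonarchimedean _ _) ?_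
    rw [norm_neg]
  have happr : ∀ (x : ℤ_[p]) (n : ℕ), ‖x - (x.appr n : ℤ_[p])‖ ≤ (p : ℝ) ^ (-(n : ℤ)) :=
    fun x n => (PadicInt.norm_le_pow_iff_mem_span_pow _ n).mpr (PadicInt.appr_spec n x)
  have hcauchy : ∀ x : ℤ_[p], CauchySeq (fun n => b ^ x.appr n) := by
    intro x
    apply cauchySeq_of_le_geometric c ‖b - 1‖ hc1
    intro n
    rw [dist_eq_norm]
    refine le_trans (myEst hna hb1 _ _ n ?_) (le_trans (hdecay n) (le_of_eq (mul_comm _ _)))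
    have heq : ((x.appr n : ℤ_[p]) - x.appr (n + 1)) = (x - x.appr (n + 1)) - (x - x.appr n) := by
      ring
    rw [heq]
    exact le_trans (hsub _ _)
      (max_le (le_trans (happr x (n + 1)) (hple n (n + 1) (by omega))) (happr x n))
  choose F hFlim using fun x => cauchySeq_tendsto_of_complete (hcauchy x)
  have hlim : ∀ (x : ℤ_[p]) (a : ℕ → ℕ), (∀ n, ‖x - (a n : ℤ_[p])‖ ≤ (p : ℝ) ^ (-(n : ℤ))) →
      Filter.Tendsto (fun n => b ^ a n) Filter.atTop (nhds (F x)) := by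
    intro x a ha
    have hdiff : Filter.Tendsto (fun n => b ^ a n - b ^ x.appr n) Filter.atTop (nhds 0) := by
      apply squeeze_zero_norm (a := fun n => c ^ n * ‖b - 1‖)
      · intro n
        refine le_trans (myEst hna hb1 _ _ n ?_) (hdecay n)
        have heq : ((a n : ℤ_[p]) - x.appr n) = (x - x.appr n) - (x - a n) := by ring
        rw [heq]
        exact le_trans (hsub _ _) (max_le (happr x n) (ha n))
      · simpa using (tendsto_pow_atTop_nhds_zero_of_lt_one hc0 hc1).mul_const ‖b - 1‖
    have := hdiff.add (hFlim x)
    simpa using this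
  have f1 : F 1 = b := by
    have h1 := hlim 1 (fun _ => 1) (by intro n; simp)
    simp only [pow_one] at h1
    exact tendsto_nhds_unique h1 tendsto_const_nhds
  have hadd : ∀ x y : ℤ_[p], F (x + y) = F x * F y := by
    intro x y
    have ha : ∀ n, ‖(x + y) - ((x.appr n + y.appr n : ℕ) : ℤ_[p])‖ ≤ (p : ℝ) ^ (-(n : ℤ)) := by
      intro n
      push_cast
      have heq : x + y - ((x.appr n : ℤ_[p]) + (y.appr n : ℤ_[p]))
          = (x - x.appr n) + (y - y.appr n) := by ring
      rw [heq]
      exact le_trans (PadicInt.nonarchimedean _ _) (max_le (happr x n) (happr y n))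
    have h1 := hlim (x + y) _ ha
    have h3 : (fun n => b ^ (x.appr n + y.appr n)) = fun n => b ^ x.appr n * b ^ y.appr n := by
      funext n; rw [pow_add]
    rw [h3] at h1
    exact tendsto_nhds_unique h1 ((hFlim x).mul (hFlim y))
  have hnorm : ∀ x, ‖F x - 1‖ ≤ ‖b - 1‖ := by
    intro x
    have ht : Filter.Tendsto (fun n => ‖b ^ x.appr n - 1‖) Filter.atTop (nhds ‖F x - 1‖) :=
      ((hFlim x).sub tendsto_const_nhds).norm
    exact le_of_tendsto ht (Filter.Eventually.of_forall fun n => myPowSubOne hna hb1 _)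
  have hcont : Continuous F := by
    rw [Metric.continuous_iff]
    intro x ε hε
    obtain ⟨k, hk⟩ : ∃ k, c ^ k * ‖b - 1‖ < ε := by
      have ht : Filter.Tendsto (fun n => c ^ n * ‖b - 1‖) Filter.atTop (nhds 0) := by
        simpa using (tendsto_pow_atTop_nhds_zero_of_lt_one hc0 hc1).mul_const ‖b - 1‖
      exact (ht.eventually (gt_mem_nhds hε)).exists
    refine ⟨(p : ℝ) ^ (-(k : ℤ)), by positivity, fun y hy => ?_⟩
    rw [dist_eq_norm]
    refine lt_of_le_of_lt ?_ hk
    refine le_of_tendsto (((hFlim y).sub (hFlim x)).norm) ?_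
    filter_upwards [Filter.eventually_ge_atTop k] with n hn
    refine le_trans (myEst hna hb1 _ _ k ?_) (hdecay k)
    have heq : ((y.appr n : ℤ_[p]) - x.appr n)
        = ((y - x) + (x - x.appr n)) - (y - y.appr n) := by ring
    rw [heq]
    refine le_trans (hsub _ _) (max_le (le_trans (PadicInt.nonarchimedean _ _) (max_le ?_ ?_)) ?_)
    · rw [← dist_eq_norm]; exact hy.le
    · exact le_trans (happr x n) (hple k n hn)
    · exact le_trans (happr y n) (hple k n hn)
  exact ⟨F, hcont, hadd, hnorm, f1⟩

lemma myHomNat {p : ℕ} [Fact p.Prime] (f : ℤ_[p] → K)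
    (hadd : ∀ a b : ℤ_[p], f (a + b) = f a * f b) (hU : ∀ a : ℤ_[p], ‖f a - 1‖ < 1) :
    ∀ n : ℕ, f n = f 1 ^ n := by
  have h0 : f 0 ≠ 0 := by
    intro h
    have := hU 0
    rw [h] at this
    simp at this
  have h00 : f 0 = 1 := by
    have h := hadd 0 0
    rw [add_zero] at h
    exact mul_left_cancel₀ h0 (h.symm.trans (mul_one (f 0)).symm)
  intro n
  induction n with
  | zero => simpa using h00
  | succ k ih =>
    have : ((k + 1 : ℕ) : ℤ_[p]) = (k : ℤ_[p]) + 1 := by push_cast; ring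
    rw [this, hadd, ih, pow_succ]

theorem eval_one_bijective_homc_Zp_U1'
    (p : ℕ) [Fact (Nat.Prime p)]
    [CompleteSpace K]
    (hna : IsNonarchimedean fun x : K => ‖x‖)
    (hp : ‖(p : K)‖ = (p : ℝ)⁻¹) :
    Function.Bijective
      (fun f : {f : ℤ_[p] → K // Continuous f ∧ (∀ a b : ℤ_[p], f (a + b) = f a * f b) ∧
          ∀ a : ℤ_[p], ‖f a - 1‖ < 1} =>
        (⟨f.1 1, f.2.2.2 1⟩ : {x : K // ‖x - 1‖ < 1})) := by
  constructor
  · rintro ⟨f, hfc, hfadd, hfU⟩ ⟨g, hgc, hgadd, hgU⟩ h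
    simp only [Subtype.mk.injEq] at h
    refine Subtype.ext ?_
    exact PadicInt.denseRange_natCast.equalizer hfc hgc
      (funext fun n => by
        simp only [Function.comp_apply, myHomNat f hfadd hfU n, myHomNat g hgadd hgU n, h])
  · rintro ⟨b, hb⟩
    obtain ⟨f, hc, ha, hn, h1⟩ := myExists p hna hp b hb
    exact ⟨⟨f, hc, ha, fun a => lt_of_le_of_lt (hn a) hb⟩, Subtype.ext h1⟩


theorem eval_one_bijective_homc_Zp_U1
    (p : ℕ) [Fact (Nat.Prime p)]
    (K : Type) [NormedField K] [CompleteSpace K] [IsAlgClosed K] [CharZero K]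
    (hna : IsNonarchimedean fun x : K => ‖x‖)
    (hp : ‖(p : K)‖ = (p : ℝ)⁻¹) :
    Function.Bijective
      (fun f : {f : ℤ_[p] → K // Continuous f ∧ (∀ a b : ℤ_[p], f (a + b) = f a * f b) ∧
          ∀ a : ℤ_[p], ‖f a - 1‖ < 1} =>
        (⟨f.1 1, f.2.2.2 1⟩ : {x : K // ‖x - 1‖ < 1})) :=
  eval_one_bijective_homc_Zp_U1' p hna hp
end

section
/- On Hom_c(π, 𝔬*), for π as above (extension of ẑⁿ by a finite discrete group), the topology of uniform convergence coincides with the topology of pointwise convergence. -/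
/-!
In a nonarchimedean field, two characters `ψ, χ` with values of norm one are `ε`-close on a
closed subgroup, namely `{a | ‖ψ a - χ a‖ ≤ ε}`. Hence closeness on a set of topological
generators is uniform closeness. The kernel of `π → ẑⁿ` together with lifts of the standard basis
of `ẑⁿ` is such a set, and it is finite, so pointwise convergence of characters on it is already
uniform convergence.
-/

noncomputable section

instance (n : ℕ) : TopologicalSpace (ZMod n) := ⊥
instance (n : ℕ) : DiscreteTopology (ZMod n) := ⟨rfl⟩
instance (n : ℕ) : ContinuousAdd (ZMod n) := ⟨continuous_of_discreteTopology⟩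
instance (n : ℕ) : ContinuousNeg (ZMod n) := ⟨continuous_of_discreteTopology⟩

/-- The profinite completion `ẑ` of `ℤ`, realized as compatible families in `∏ ZMod n`. -/
def ZHat : Type :=
  {f : (n : ℕ+) → ZMod (n : ℕ) // ∀ (m n : ℕ+) (h : (m : ℕ) ∣ (n : ℕ)),
    ZMod.castHom h (ZMod (m : ℕ)) (f n) = f m}

namespace ZHat

instance : Zero ZHat := ⟨⟨fun _ => 0, fun _ _ _ => map_zero _⟩⟩
instance : One ZHat := ⟨⟨fun _ => 1, fun _ _ _ => map_one _⟩⟩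
instance : Add ZHat :=
  ⟨fun a b => ⟨fun n => a.1 n + b.1 n, fun m n h => by rw [map_add, a.2 m n h, b.2 m n h]⟩⟩
instance : Neg ZHat :=
  ⟨fun a => ⟨fun n => -a.1 n, fun m n h => by rw [map_neg, a.2 m n h]⟩⟩
instance : Sub ZHat :=
  ⟨fun a b => ⟨fun n => a.1 n - b.1 n, fun m n h => by rw [map_sub, a.2 m n h, b.2 m n h]⟩⟩
instance : SMul ℕ ZHat :=
  ⟨fun k a => ⟨fun n => k • a.1 n, fun m n h => by rw [map_nsmul, a.2 m n h]⟩⟩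
instance : SMul ℤ ZHat :=
  ⟨fun k a => ⟨fun n => k • a.1 n, fun m n h => by rw [map_zsmul, a.2 m n h]⟩⟩

instance : AddCommGroup ZHat :=
  Function.Injective.addCommGroup (fun f : ZHat => (f.1 : (n : ℕ+) → ZMod (n : ℕ)))
    Subtype.coe_injective rfl (fun _ _ => rfl) (fun _ => rfl) (fun _ _ => rfl)
    (fun _ _ => rfl) (fun _ _ => rfl)

instance : TopologicalSpace ZHat := instTopologicalSpaceSubtype

lemma continuous_eval (n : ℕ+) : Continuous fun a : ZHat => a.1 n :=
  (continuous_apply n).comp continuous_subtype_val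

instance : ContinuousAdd ZHat :=
  ⟨Continuous.subtype_mk (continuous_pi fun n =>
    (((continuous_eval n).comp continuous_fst).add ((continuous_eval n).comp continuous_snd))) _⟩

instance : ContinuousNeg ZHat :=
  ⟨Continuous.subtype_mk (continuous_pi fun n => (continuous_eval n).neg) _⟩

instance : IsTopologicalAddGroup ZHat :=
  { continuous_add := continuous_add, continuous_neg := continuous_neg }

instance : CompactSpace ZHat := by
  have hc : IsClosed {f : (n : ℕ+) → ZMod (n : ℕ) | ∀ (m n : ℕ+) (h : (m : ℕ) ∣ (n : ℕ)),
      ZMod.castHom h (ZMod (m : ℕ)) (f n) = f m} := by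
    have : {f : (n : ℕ+) → ZMod (n : ℕ) | ∀ (m n : ℕ+) (h : (m : ℕ) ∣ (n : ℕ)),
        ZMod.castHom h (ZMod (m : ℕ)) (f n) = f m} =
        ⋂ (m : ℕ+) (n : ℕ+) (h : (m : ℕ) ∣ (n : ℕ)),
          {f : (n : ℕ+) → ZMod (n : ℕ) | ZMod.castHom h (ZMod (m : ℕ)) (f n) = f m} := by
      ext f; simp [Set.mem_iInter]
    rw [this]
    exact isClosed_iInter fun m => isClosed_iInter fun n => isClosed_iInter fun h =>
      isClosed_eq (continuous_of_discreteTopology.comp (continuous_apply n)) (continuous_apply m)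
  exact isCompact_iff_compactSpace.mp hc.isCompact

end ZHat

open Topology Filter

namespace ZHat

instance : T2Space ZHat :=
  inferInstanceAs (T2Space {f : (n : ℕ+) → ZMod (n : ℕ) // ∀ (m n : ℕ+) (h : (m : ℕ) ∣ (n : ℕ)),
    ZMod.castHom h (ZMod (m : ℕ)) (f n) = f m})

lemma nsmul_one_apply (k : ℕ) (m : ℕ+) : (k • (1 : ZHat)).1 m = k :=
  nsmul_one k

/-- A basic open set of `∏ ZMod n` constrains finitely many coordinates `m`, and all of them are
determined by the coordinate at the product `N` of those `m`. -/
lemma denseRange_nsmul_one : DenseRange fun k : ℕ => k • (1 : ZHat) := by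
  refine dense_iff_inter_open.mpr fun U hU ⟨x, hxU⟩ => ?_
  obtain ⟨V, hV, rfl⟩ := isOpen_induced_iff.mp hU
  obtain ⟨I, u, hu, huV⟩ := isOpen_pi_iff.mp hV x.1 hxU
  let N : ℕ+ := ⟨∏ m ∈ I, (m : ℕ), Finset.prod_pos fun m _ => m.pos⟩
  refine ⟨(x.1 N).val • 1, huV fun m hm => ?_, _, rfl⟩
  have hmN : (m : ℕ) ∣ N := Finset.dvd_prod_of_mem _ hm
  rw [nsmul_one_apply, ZMod.natCast_val, ← ZMod.castHom_apply (h := hmN), x.2 m N hmN]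
  exact (hu m hm).2

lemma dense_closure_range_single (n : ℕ) :
    Dense (AddSubgroup.closure (Set.range fun i : Fin n => Pi.single i (1 : ZHat)) :
      Set (Fin n → ZHat)) := by
  refine (dense_pi Set.univ fun _ _ => denseRange_nsmul_one).mono fun h hh => ?_
  rw [← Finset.univ_sum_single h]
  refine AddSubgroup.sum_mem _ fun i _ => ?_
  obtain ⟨k, hk⟩ := hh i (Set.mem_univ i)
  rw [← hk, Pi.single_smul]
  exact AddSubgroup.nsmul_mem _ (AddSubgroup.subset_closure (Set.mem_range_self i)) k

end ZHat

section TopologicalGeneration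

variable {A : Type*} [AddGroup A] [TopologicalSpace A]

def TopologicallyGenerates (S : Set A) : Prop :=
  ∀ D : AddSubgroup A, IsClosed (D : Set A) → S ⊆ D → D = ⊤

/-- The image of a closed subgroup under `q` is compact, hence closed; if it is also dense, it is
everything, and a subgroup containing `ker q` is the full preimage of its image. -/
lemma TopologicallyGenerates.of_map [CompactSpace A] {G : Type*} [AddGroup G] [TopologicalSpace G]
    [T2Space G] {q : A →+ G} (hqc : Continuous q) {S : Set A} (hker : (q.ker : Set A) ⊆ S)
    (hS : Dense (AddSubgroup.closure (q '' S) : Set G)) : TopologicallyGenerates S := by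
  intro D hD hSD
  have hmap_closed : IsClosed (D.map q : Set G) := hqc.isClosedMap _ hD
  have hmap_dense : Dense (D.map q : Set G) :=
    hS.mono <| (AddSubgroup.closure_le _).mpr <| Set.image_mono hSD
  have hmap_top : D.map q = ⊤ :=
    SetLike.coe_injective <| by rw [← hmap_closed.closure_eq, hmap_dense.closure_eq]; rfl
  have hker_le : q.ker ≤ D := fun x hx => hSD (hker hx)
  rw [← sup_eq_left.mpr hker_le, ← AddSubgroup.comap_map_eq, hmap_top, AddSubgroup.comap_top]

end TopologicalGeneration

section NormOneCharacters

variable {A K : Type*} [AddCommGroup A] [NormedField K]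

def AddChar.ofMapAddEqMul {M : Type*} [MonoidWithZero M] [IsLeftCancelMulZero M] (f : A → M)
    (hf : ∀ a b, f (a + b) = f a * f b) (h0 : f 0 ≠ 0) : AddChar A M where
  toFun := f
  map_zero_eq_one' := mul_left_cancel₀ h0 (by rw [← hf, add_zero, mul_one])
  map_add_eq_mul' := hf

/-- A subgroup by the ultrametric inequality and
`ψ (a + b) - χ (a + b) = ψ a (ψ b - χ b) + (ψ a - χ a) χ b`,
`ψ (-a) - χ (-a) = (χ a - ψ a) / (ψ a χ a)`. -/
def AddChar.closeSubgroup (hna : IsNonarchimedean fun x : K => ‖x‖) (ψ χ : AddChar A K)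
    (hψ : ∀ a, ‖ψ a‖ = 1) (hχ : ∀ a, ‖χ a‖ = 1) {ε : ℝ} (hε : 0 ≤ ε) : AddSubgroup A where
  carrier := {a | ‖ψ a - χ a‖ ≤ ε}
  zero_mem' := by simp [hε]
  add_mem' {a b} ha hb := by
    change ‖ψ a - χ a‖ ≤ ε at ha
    change ‖ψ b - χ b‖ ≤ ε at hb
    have hab : ψ (a + b) - χ (a + b) = ψ a * (ψ b - χ b) + (ψ a - χ a) * χ b := by
      rw [AddChar.map_add_eq_mul, AddChar.map_add_eq_mul]; ring
    change ‖ψ (a + b) - χ (a + b)‖ ≤ ε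
    rw [hab]
    refine (hna _ _).trans (max_le ?_ ?_)
    · simpa only [norm_mul, hψ, one_mul] using hb
    · simpa only [norm_mul, hχ, mul_one] using ha
  neg_mem' {a} ha := by
    have hψa : ψ a ≠ 0 := norm_ne_zero_iff.mp (by simp [hψ])
    have hχa : χ a ≠ 0 := norm_ne_zero_iff.mp (by simp [hχ])
    change ‖ψ (-a) - χ (-a)‖ ≤ ε
    rw [AddChar.map_neg_eq_inv, AddChar.map_neg_eq_inv, inv_sub_inv hψa hχa, norm_div, norm_mul,
      hψ, hχ, mul_one, div_one, norm_sub_rev]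
    exact ha

lemma AddChar.norm_sub_le_of_topologicallyGenerates [TopologicalSpace A]
    (hna : IsNonarchimedean fun x : K => ‖x‖) {ψ χ : AddChar A K}
    (hψc : Continuous ψ) (hχc : Continuous χ) (hψ : ∀ a, ‖ψ a‖ = 1) (hχ : ∀ a, ‖χ a‖ = 1)
    {S : Set A} (hS : TopologicallyGenerates S) {ε : ℝ} (hε : 0 ≤ ε)
    (hSε : ∀ s ∈ S, ‖ψ s - χ s‖ ≤ ε) (a : A) : ‖ψ a - χ a‖ ≤ ε := by
  have hD := hS (closeSubgroup hna ψ χ hψ hχ hε)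
    (isClosed_le (hψc.sub hχc).norm continuous_const) hSε
  exact (hD ▸ AddSubgroup.mem_top a : a ∈ closeSubgroup hna ψ χ hψ hχ hε)

variable (A K) in
/-- `Hom_c(A, 𝔬*)`, with `𝔬*` the elements of norm one. -/
def normOneCharacters [TopologicalSpace A] : Set C(A, K) :=
  {f | (∀ a b, f (a + b) = f a * f b) ∧ ∀ a, ‖f a‖ = 1}

def normOneCharacters.toAddChar [TopologicalSpace A] (f : normOneCharacters A K) : AddChar A K :=
  .ofMapAddEqMul f.1 f.2.1 (norm_ne_zero_iff.mp (by rw [f.2.2]; exact one_ne_zero))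

theorem normOneCharacters_uniform_eq_pointwise [TopologicalSpace A] [CompactSpace A]
    (hna : IsNonarchimedean fun x : K => ‖x‖) {S : Set A} (hSfin : S.Finite)
    (hS : TopologicallyGenerates S) :
    (instTopologicalSpaceSubtype : TopologicalSpace (normOneCharacters A K)) =
      TopologicalSpace.induced (fun f : normOneCharacters A K => (⇑f.1 : A → K))
        Pi.topologicalSpace := by
  refine le_antisymm (continuous_iff_le_induced.mp (continuous_coeFun.comp continuous_subtype_val))
    (continuous_iff_le_induced.mp ?_)
  refine (@Metric.continuous_iff' _ _ _ (.induced _ _) _).mpr fun f ε hε => ?_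
  have hS_near : ∀ᶠ h : A → K in 𝓝 ⇑f.1, ∀ s ∈ S, dist (h s) (f.1 s) < ε / 2 :=
    (eventually_all_finite hSfin).mpr fun s _ =>
      Metric.tendsto_nhds.mp ((continuous_apply s).tendsto _) _ (half_pos hε)
  rw [nhds_induced, eventually_comap]
  refine hS_near.mono fun h hh g hgh => ?_
  subst hgh
  have hbound : dist g.1 f.1 ≤ ε / 2 := by
    refine (ContinuousMap.dist_le (half_pos hε).le).mpr fun a => ?_
    rw [dist_eq_norm]
    refine AddChar.norm_sub_le_of_topologicallyGenerates (ψ := normOneCharacters.toAddChar g)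
      (χ := normOneCharacters.toAddChar f) hna g.1.continuous f.1.continuous g.2.2 f.2.2 hS
      (half_pos hε).le (fun s hs => ?_) a
    rw [← dist_eq_norm]
    exact (hh s hs).le
  exact hbound.trans_lt (half_lt_self hε)

end NormOneCharacters

theorem homc_uniform_eq_pointwise_general
    (K : Type) [NormedField K]
    (hna : IsNonarchimedean fun x : K => ‖x‖)
    (n : ℕ) (π : Type) [AddCommGroup π] [TopologicalSpace π]
    [CompactSpace π]
    (q : π →+ (Fin n → ZHat)) (hqc : Continuous q) (hqs : Function.Surjective q)
    (hker : ((AddMonoidHom.ker q : AddSubgroup π) : Set π).Finite) :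
    (instTopologicalSpaceSubtype :
        TopologicalSpace {f : C(π, K) // (∀ a b : π, f (a + b) = f a * f b) ∧
          ∀ a : π, ‖f a‖ = 1}) =
      TopologicalSpace.induced
        (fun f : {f : C(π, K) // (∀ a b : π, f (a + b) = f a * f b) ∧
          ∀ a : π, ‖f a‖ = 1} => (⇑f.1 : π → K))
        Pi.topologicalSpace := by
  choose e he using fun i : Fin n => hqs (Pi.single i 1)
  have hS : TopologicallyGenerates ((q.ker : Set π) ∪ Set.range e) := by
    refine .of_map hqc Set.subset_union_left <| (ZHat.dense_closure_range_single n).mono <|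
      AddSubgroup.closure_mono ?_
    rintro _ ⟨i, rfl⟩
    exact ⟨e i, Or.inr ⟨i, rfl⟩, he i⟩
  exact normOneCharacters_uniform_eq_pointwise hna (hker.union (Set.finite_range e)) hS

theorem homc_uniform_eq_pointwise
    (p : ℕ) [Fact (Nat.Prime p)]
    (K : Type) [NormedField K] [CompleteSpace K] [IsAlgClosed K] [CharZero K]
    (hna : IsNonarchimedean fun x : K => ‖x‖)
    (hp : ‖(p : K)‖ = (p : ℝ)⁻¹)
    (n : ℕ) (π : Type) [AddCommGroup π] [TopologicalSpace π] [IsTopologicalAddGroup π]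
    [CompactSpace π]
    (q : π →+ (Fin n → ZHat)) (hqc : Continuous q) (hqs : Function.Surjective q)
    (hqopen : IsOpenMap q)
    (hker : ((AddMonoidHom.ker q : AddSubgroup π) : Set π).Finite) :
    (instTopologicalSpaceSubtype :
        TopologicalSpace {f : C(π, K) // (∀ a b : π, f (a + b) = f a * f b) ∧
          ∀ a : π, ‖f a‖ = 1}) =
      TopologicalSpace.induced
        (fun f : {f : C(π, K) // (∀ a b : π, f (a + b) = f a * f b) ∧
          ∀ a : π, ‖f a‖ = 1} => (⇑f.1 : π → K))
        Pi.topologicalSpace :=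
  homc_uniform_eq_pointwise_general K hna n π q hqc hqs hker
end
end

section
/- Let f : X → Y be a continuous injective group homomorphism of topological abelian groups such that: the kernels of locally homeomorphic 'logarithm' maps log_X : X → V, log_Y : Y → W (V, W topological vector spaces over ℂ_p, log_X surjective) are the torsion subgroups, f restricts to an isomorphism on torsion subgroups, and the induced linear map V → W is injective with closed image. Then f is a closed map, hence a topological isomorphism onto its (closed) image. -/
/-!
Along any filter `l` on `X` with `f → y`, the identity `g ∘ log_X = log_Y ∘ f` and the closed
injective `g` force `log_X` to converge to some `log_X x₀`. Lifting through a local inverse of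
`log_X` gives `u → x₀` with `log_X ∘ u = log_X`, so `a - u a` is eventually in the kernel of
`log_X`; its image under `f` then lies in the kernel of `log_Y`, which is discrete, and the torsion
hypothesis pulls its limit back to `X`, so `a - u a` is eventually a constant `x'`. Hence
`l → x₀ + x'`: the map `f` is proper, and an injective proper map is a closed embedding.
-/

open Filter Topology Function Set

theorem IsClosedMap.tendsto_nhds_of_tendsto_comp {α V W : Type*} [TopologicalSpace V]
    [TopologicalSpace W] {g : V → W} (hg : IsClosedMap g) (hgi : Injective g) {l : Filter α}
    {a : α → V} {v : V} (h : Tendsto (g ∘ a) l (𝓝 (g v))) : Tendsto a l (𝓝 v) := by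
  refine tendsto_nhds.mpr fun U hU hvU => ?_
  have hgv : g v ∈ (g '' Uᶜ)ᶜ := by
    rintro ⟨v', hv'U, hv'⟩
    exact hv'U (hgi hv' ▸ hvU)
  filter_upwards [tendsto_nhds.mp h _ (hg _ hU.isClosed_compl).isOpen_compl hgv] with i hi
  by_contra hiU
  exact hi ⟨a i, hiU, rfl⟩

namespace IsLocalHomeomorph

variable {α X V : Type*} [TopologicalSpace X] [TopologicalSpace V] {φ : X → V} {l : Filter α}

theorem exists_tendsto_lift (hφ : IsLocalHomeomorph φ) {w : α → V} {x : X}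
    (hw : Tendsto w l (𝓝 (φ x))) :
    ∃ u : α → X, Tendsto u l (𝓝 x) ∧ ∀ᶠ i in l, φ (u i) = w i := by
  set e := hφ.localInverseAt x
  have he : φ x ∈ e.source := hφ.apply_self_mem_localInverseAt_source
  refine ⟨e ∘ w, ?_, ?_⟩
  · simpa only [e, hφ.localInverseAt_apply_self] using (e.continuousAt he).tendsto.comp hw
  · filter_upwards [hw.eventually_mem (e.open_source.mem_nhds he)] with i hi
    exact hφ.apply_localInverseAt_of_mem hi

theorem eventually_eq_of_tendsto (hφ : IsLocalHomeomorph φ) {z : α → X} {x : X}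
    (hz : Tendsto z l (𝓝 x)) (hφz : ∀ᶠ i in l, φ (z i) = φ x) :
    ∀ᶠ i in l, z i = x := by
  obtain ⟨U, hU, hinj⟩ := isLocallyInjective_iff_nhds.mp hφ.isLocallyInjective x
  filter_upwards [hz.eventually_mem hU, hφz] with i hiU hi
  exact hinj hiU (mem_of_mem_nhds hU) hi

end IsLocalHomeomorph

section LogarithmComparison

variable {X Y V W : Type*} [AddGroup X] [AddGroup Y] [AddGroup W]
  [TopologicalSpace Y] [TopologicalSpace V] [TopologicalSpace W]
  {f : X →+ Y} {logX : X → V} {logY : Y →+ W} {g : V → W}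

theorem exists_tendsto_log_of_tendsto (hlocY : IsLocalHomeomorph logY)
    (hsurjX : Surjective logX) (hcomm : ∀ x, g (logX x) = logY (f x))
    (hgi : Injective g) (hgcl : IsClosedMap g) {l : Filter X} [l.NeBot] {y : Y}
    (hy : Tendsto f l (𝓝 y)) :
    ∃ x₀, logY (f x₀) = logY y ∧ Tendsto logX l (𝓝 (logX x₀)) := by
  have hglog : Tendsto (g ∘ logX) l (𝓝 (logY y)) := by
    simpa only [comp_def, hcomm] using (hlocY.continuous.tendsto y).comp hy
  obtain ⟨v, hv⟩ : logY y ∈ range g :=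
    hgcl.isClosed_range.mem_of_tendsto hglog (Eventually.of_forall fun a => mem_range_self _)
  obtain ⟨x₀, rfl⟩ := hsurjX v
  exact ⟨x₀, hcomm x₀ ▸ hv, hgcl.tendsto_nhds_of_tendsto_comp hgi (hv ▸ hglog)⟩

theorem exists_eventually_eq_of_tendsto_of_log_eq_zero (hfi : Injective f)
    (hlocY : IsLocalHomeomorph logY) (hker : ∀ y, logY y = 0 → y ∈ range f)
    {α : Type*} {l : Filter α} {t : α → X} {y : Y} (hy : logY y = 0)
    (ht : Tendsto (f ∘ t) l (𝓝 y)) (hlog : ∀ᶠ i in l, logY (f (t i)) = 0) :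
    ∃ x, f x = y ∧ ∀ᶠ i in l, t i = x := by
  obtain ⟨x, rfl⟩ := hker y hy
  refine ⟨x, rfl, ?_⟩
  have hlog' : ∀ᶠ i in l, logY ((f ∘ t) i) = logY (f x) := by
    simpa only [comp_apply, hy] using hlog
  filter_upwards [hlocY.eventually_eq_of_tendsto ht hlog'] with i hi
  exact hfi hi

theorem isProperMap_of_log [TopologicalSpace X] [ContinuousAdd X] [ContinuousSub Y]
    (hfc : Continuous f) (hfi : Injective f)
    (hlocX : IsLocalHomeomorph logX) (hlocY : IsLocalHomeomorph logY)
    (hsurjX : Surjective logX) (hker : ∀ y, logY y = 0 → y ∈ range f)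
    (hcomm : ∀ x, g (logX x) = logY (f x)) (hgi : Injective g) (hgcl : IsClosedMap g) :
    IsProperMap f := by
  refine isProperMap_iff_ultrafilter.mpr ⟨hfc, fun l y hy => ?_⟩
  obtain ⟨x₀, hlogY, hlog⟩ := exists_tendsto_log_of_tendsto hlocY hsurjX hcomm hgi hgcl hy
  obtain ⟨u, hu, hlogu⟩ := hlocX.exists_tendsto_lift hlog
  have hfu : Tendsto (f ∘ fun a => a - u a) l (𝓝 (y - f x₀)) := by
    simpa only [comp_def, map_sub] using hy.sub ((hfc.tendsto x₀).comp hu)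
  have hker_sub : ∀ᶠ a in l, logY (f (a - u a)) = 0 := by
    filter_upwards [hlogu] with a ha
    rw [map_sub, map_sub, ← hcomm, ← hcomm, ha, sub_self]
  obtain ⟨x', hfx', hx'⟩ := exists_eventually_eq_of_tendsto_of_log_eq_zero hfi hlocY hker
    (by rw [map_sub, hlogY, sub_self]) hfu hker_sub
  refine ⟨x' + x₀, by rw [map_add, hfx', sub_add_cancel], ?_⟩
  refine (tendsto_const_nhds.add hu).congr' ?_
  filter_upwards [hx'] with a ha
  rw [← ha, sub_add_cancel]

end LogarithmComparison

theorem closed_map_criterion_general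
    (K : Type) [NormedField K]
    (X Y V W : Type)
    [AddCommGroup X] [TopologicalSpace X] [IsTopologicalAddGroup X]
    [AddCommGroup Y] [TopologicalSpace Y] [IsTopologicalAddGroup Y]
    [AddCommGroup V] [Module K V] [TopologicalSpace V]
    [AddCommGroup W] [Module K W] [TopologicalSpace W]
    (f : X →+ Y) (hfc : Continuous f) (hfi : Function.Injective f)
    (logX : X →+ V) (logY : Y →+ W)
    (hlocX : IsLocalHomeomorph (⇑logX)) (hlocY : IsLocalHomeomorph (⇑logY))
    (hsurjX : Function.Surjective (⇑logX))
    (hkerY : ∀ y : Y, logY y = 0 ↔ ∃ k : ℕ, 0 < k ∧ k • y = 0)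
    (htors : ∀ y : Y, (∃ k : ℕ, 0 < k ∧ k • y = 0) → ∃ x : X, f x = y)
    (g : V →ₗ[K] W) (hcomm : ∀ x : X, g (logX x) = logY (f x))
    (hgi : Function.Injective g) (hgcl : IsClosedMap g) :
    IsClosedMap f ∧ IsClosed (Set.range f) ∧ Topology.IsClosedEmbedding (⇑f) := by
  have hproper : IsProperMap f := isProperMap_of_log hfc hfi hlocX hlocY hsurjX
    (fun y hy => htors y ((hkerY y).mp hy)) hcomm hgi hgcl
  exact ⟨hproper.isClosedMap, hproper.isClosedMap.isClosed_range,
    .of_continuous_injective_isClosedMap hfc hfi hproper.isClosedMap⟩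

theorem closed_map_criterion
    (p : ℕ) [Fact (Nat.Prime p)]
    (K : Type) [NormedField K] [CompleteSpace K] [IsAlgClosed K] [CharZero K]
    (hna : IsNonarchimedean fun x : K => ‖x‖)
    (hp : ‖(p : K)‖ = (p : ℝ)⁻¹)
    (X Y V W : Type)
    [AddCommGroup X] [TopologicalSpace X] [IsTopologicalAddGroup X]
    [FirstCountableTopology X]
    [AddCommGroup Y] [TopologicalSpace Y] [IsTopologicalAddGroup Y]
    [FirstCountableTopology Y]
    [AddCommGroup V] [Module K V] [TopologicalSpace V] [IsTopologicalAddGroup V]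
    [AddCommGroup W] [Module K W] [TopologicalSpace W] [IsTopologicalAddGroup W]
    (f : X →+ Y) (hfc : Continuous f) (hfi : Function.Injective f)
    (logX : X →+ V) (logY : Y →+ W)
    (hlocX : IsLocalHomeomorph (⇑logX)) (hlocY : IsLocalHomeomorph (⇑logY))
    (hsurjX : Function.Surjective (⇑logX))
    (hkerX : ∀ x : X, logX x = 0 ↔ ∃ k : ℕ, 0 < k ∧ k • x = 0)
    (hkerY : ∀ y : Y, logY y = 0 ↔ ∃ k : ℕ, 0 < k ∧ k • y = 0)
    (htors : ∀ y : Y, (∃ k : ℕ, 0 < k ∧ k • y = 0) → ∃ x : X, f x = y)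
    (g : V →ₗ[K] W) (hcomm : ∀ x : X, g (logX x) = logY (f x))
    (hgc : Continuous g) (hgi : Function.Injective g) (hgcl : IsClosedMap g) :
    IsClosedMap f ∧ IsClosed (Set.range f) ∧ Topology.IsClosedEmbedding (⇑f) :=
  closed_map_criterion_general K X Y V W f hfc hfi logX logY hlocX hlocY hsurjX hkerY htors g hcomm
    hgi hgcl
end
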